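/- arXiv:2202.02780 — 4 statements merged into one kernel-verified Lean document; each statement's English description precedes it below -/
import Mathlib

section
/- Let p be an odd prime and A, B ⊆ 𝔽_p nonempty subsets with A + B ⊆ R_p, where R_p is the set of nonzero quadratic residues mod p. Then p·|A|·|B| ≤ (p − |A|)·(p − |B|). -/
open Finset

lemma shift_sum {F : Type*} [Field F] [Fintype F] [DecidableEq F] (hF : ringChar F ≠ 2)
    (c : F) (hc : c ≠ 0) :
    ∑ x : F, quadraticChar F x * quadraticChar F (x + c) = -1 := by
  have key : ∀ x : F, x ≠ 0 →
      quadraticChar F x * quadraticChar F (x + c) = quadraticChar F (1 + c * x⁻¹) := by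
    intro x hx
    have hxc : x + c = x * (1 + c * x⁻¹) := by field_simp
    rw [hxc, map_mul, ← mul_assoc, ← pow_two, quadraticChar_sq_one hx, one_mul]
  have htail : ∑ y ∈ ({(1:F)} : Finset F)ᶜ, quadraticChar F y = -1 := by
    have := quadraticChar_sum_zero hF
    rw [← Finset.sum_compl_add_sum ({(1:F)} : Finset F)] at this
    simp only [Finset.sum_singleton, map_one] at this
    linarith
  rw [← Finset.sum_compl_add_sum {(0:F)}]
  have h0 : ∑ x ∈ ({(0:F)} : Finset F), quadraticChar F x * quadraticChar F (x + c) = 0 := by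
    simp [quadraticChar_zero]
  rw [h0, add_zero]
  rw [Finset.sum_congr rfl (fun x hx => key x (by simpa using hx))]
  rw [← htail]
  apply Finset.sum_nbij' (i := fun x => 1 + c * x⁻¹) (j := fun y => c * (y - 1)⁻¹)
  · intro x hx
    simp only [mem_compl, mem_singleton] at *
    intro heq
    apply hx
    have : c * x⁻¹ = 0 := by linear_combination heq
    rcases mul_eq_zero.1 this with h | h
    · exact absurd h hc
    · exact inv_eq_zero.1 h
  · intro y hy
    simp only [mem_compl, mem_singleton] at *
    intro heq
    apply hy
    rcases mul_eq_zero.1 heq with h | h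
    · exact absurd h hc
    · have := inv_eq_zero.1 h
      linear_combination this
  · intro x hx
    simp only [mem_compl, mem_singleton] at hx
    field_simp
    rw [add_sub_cancel_left, div_self hc]
  · intro y hy
    simp only [mem_compl, mem_singleton] at hy
    have h1 : y - 1 ≠ 0 := fun h => hy (by linear_combination h)
    field_simp
    ring
  · intro x hx; rfl

open scoped Pointwise

def Rp (p : ℕ) [NeZero p] : Finset (ZMod p) :=
  Finset.univ.filter fun x => x ≠ 0 ∧ IsSquare x

theorem stmt_2 (p : ℕ) [Fact p.Prime] (hp : p ≠ 2) (A B : Finset (ZMod p))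
    (hA : A.Nonempty) (hB : B.Nonempty) (h : A + B ⊆ Rp p) :
    (p : ℝ) * A.card * B.card ≤ ((p : ℝ) - A.card) * ((p : ℝ) - B.card) := by
  have hprime := Fact.out (p := p.Prime)
  have hchar : ringChar (ZMod p) ≠ 2 := by
    rw [ZMod.ringChar_zmod_n]; exact hp
  have hcard : Fintype.card (ZMod p) = p := ZMod.card p
  set χ := quadraticChar (ZMod p) with hχ
  set f : ZMod p → ℤ := fun a => ∑ b ∈ B, χ (a + b) with hf
  -- Step 1: f a = B.card for a ∈ A
  have step1 : ∀ a ∈ A, f a = B.card := by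
    intro a ha
    show ∑ b ∈ B, χ (a + b) = (B.card : ℤ)
    rw [Finset.sum_congr rfl (fun b hb => ?_), Finset.sum_const, nsmul_eq_mul, mul_one]
    have hmem : a + b ∈ Rp p := h (Finset.add_mem_add ha hb)
    rw [Rp, Finset.mem_filter] at hmem
    exact (quadraticChar_one_iff_isSquare hmem.2.1).2 hmem.2.2
  -- Step 2: total sum is 0
  have step2 : ∑ a : ZMod p, f a = 0 := by
    show ∑ a : ZMod p, ∑ b ∈ B, χ (a + b) = 0
    rw [Finset.sum_comm]
    refine Finset.sum_eq_zero fun b _ => ?_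
    rw [show ∑ a : ZMod p, χ (a + b) = ∑ x : ZMod p, χ x from
      Fintype.sum_bijective _ (Equiv.addRight b).bijective _ _ (fun a => rfl)]
    exact quadraticChar_sum_zero hchar
  -- diagonal sum
  have hdiag : ∑ x : ZMod p, χ x * χ x = (p : ℤ) - 1 := by
    rw [← Finset.sum_compl_add_sum ({(0 : ZMod p)} : Finset (ZMod p))]
    have h1 : ∑ x ∈ ({(0 : ZMod p)} : Finset (ZMod p))ᶜ, χ x * χ x
        = ∑ x ∈ ({(0 : ZMod p)} : Finset (ZMod p))ᶜ, (1 : ℤ) := by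
      refine Finset.sum_congr rfl fun x hx => ?_
      rw [← pow_two]
      exact quadraticChar_sq_one (by simpa using hx)
    rw [h1, Finset.sum_const, Finset.card_compl, Finset.sum_singleton]
    simp [hχ, quadraticChar_zero, hcard]
    push_cast
    have : 1 ≤ p := hprime.one_lt.le
    omega
  -- pair sums
  have hpair : ∀ b b' : ZMod p, ∑ a : ZMod p, χ (a + b) * χ (a + b')
      = if b = b' then (p : ℤ) - 1 else -1 := by
    intro b b'
    have hre : ∑ a : ZMod p, χ (a + b) * χ (a + b')
        = ∑ x : ZMod p, χ x * χ (x + (b' - b)) := by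
      refine Fintype.sum_bijective (· + b) (Equiv.addRight b).bijective _ _ fun a => ?_
      ring_nf
    rw [hre]
    split_ifs with hbb
    · subst hbb
      simpa using hdiag
    · exact shift_sum hchar _ (sub_ne_zero.2 (Ne.symm hbb))
  -- Step 3: sum of squares
  have step3 : ∑ a : ZMod p, (f a)^2 = B.card * ((p : ℤ) - B.card) := by
    have expand : ∀ a : ZMod p, (f a)^2 = ∑ b ∈ B, ∑ b' ∈ B, χ (a + b) * χ (a + b') := by
      intro a
      show (∑ b ∈ B, χ (a + b))^2 = _
      rw [pow_two, Finset.sum_mul_sum]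
    rw [Finset.sum_congr rfl (fun a _ => expand a), Finset.sum_comm]
    have inner : ∀ b ∈ B, ∑ b' ∈ B, ∑ a : ZMod p, χ (a + b) * χ (a + b')
        = (p : ℤ) - B.card := by
      intro b hb
      have : ∀ b' ∈ B, ∑ a : ZMod p, χ (a + b) * χ (a + b')
          = (-1 : ℤ) + (if b = b' then (p : ℤ) else 0) := by
        intro b' _
        rw [hpair]
        split_ifs <;> ring
      rw [Finset.sum_congr rfl this, Finset.sum_add_distrib, Finset.sum_const,
        Finset.sum_ite_eq, if_pos hb]
      push_cast
      ring
    have swap : ∑ b ∈ B, ∑ b' ∈ B, ∑ a : ZMod p, χ (a + b) * χ (a + b')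
        = ∑ b ∈ B, ((p : ℤ) - B.card) := Finset.sum_congr rfl inner
    rw [show ∑ b ∈ B, ∑ a : ZMod p, ∑ b' ∈ B, χ (a + b) * χ (a + b')
        = ∑ b ∈ B, ∑ b' ∈ B, ∑ a : ZMod p, χ (a + b) * χ (a + b') from
      Finset.sum_congr rfl fun b _ => Finset.sum_comm, swap, Finset.sum_const,
      nsmul_eq_mul, mul_comm]
  -- Step 4
  have hAcard : ((Aᶜ : Finset (ZMod p)).card : ℤ) = (p : ℤ) - A.card := by
    rw [Finset.card_compl, hcard]
    have := (Finset.card_le_univ A).trans_eq hcard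
    push_cast
    omega
  have step4a : ∑ a ∈ Aᶜ, f a = -((A.card : ℤ) * B.card) := by
    have := Finset.sum_compl_add_sum A f
    rw [step2] at this
    have hA' : ∑ a ∈ A, f a = (A.card : ℤ) * B.card := by
      rw [Finset.sum_congr rfl step1, Finset.sum_const, nsmul_eq_mul]
    linarith
  have step4b : ∑ a ∈ Aᶜ, (f a)^2
      = (B.card : ℤ) * ((p : ℤ) - B.card) - A.card * (B.card : ℤ)^2 := by
    have := Finset.sum_compl_add_sum A (fun a => (f a)^2)
    rw [step3] at this
    have hA' : ∑ a ∈ A, (f a)^2 = (A.card : ℤ) * (B.card : ℤ)^2 := by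
      rw [Finset.sum_congr rfl (fun a ha => by rw [step1 a ha]), Finset.sum_const,
        nsmul_eq_mul]
    linarith
  -- Step 5: Cauchy-Schwarz
  have cs := sq_sum_le_card_mul_sum_sq (s := Aᶜ) (f := f)
  rw [step4a, step4b, hAcard] at cs
  have hkey : (B.card : ℤ) * ((p : ℤ) * A.card * B.card)
      ≤ (B.card : ℤ) * (((p : ℤ) - A.card) * ((p : ℤ) - B.card)) := by
    nlinarith [cs]
  have hBpos : (0 : ℤ) < B.card := by exact_mod_cast Finset.card_pos.mpr hB
  have hfin : (p : ℤ) * A.card * B.card ≤ ((p : ℤ) - A.card) * ((p : ℤ) - B.card) :=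
    le_of_mul_le_mul_left hkey hBpos
  exact_mod_cast hfin
end

section
/- Let p be a prime and suppose A, B ⊆ 𝔽_p satisfy A + B = R_p with |A|, |B| ≥ 2, where R_p is the set of nonzero quadratic residues mod p. Let 𝔄(A,B) be the number of x ∈ A+B that have a unique representation x = a + b with a ∈ A, b ∈ B. Then 𝔄(A,B) ≥ √p / log 2 − 1.6. -/
open scoped Pointwise

def repCount {p : ℕ} (A B : Finset (ZMod p)) (x : ZMod p) : ℕ :=
  ((A ×ˢ B).filter fun ab => ab.1 + ab.2 = x).card

def uniqueRep {p : ℕ} (A B : Finset (ZMod p)) : ℕ :=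
  ((A + B).filter fun x => repCount A B x = 1).card

def addEnergy' {p : ℕ} (A B : Finset (ZMod p)) : ℕ :=
  (((A ×ˢ A) ×ˢ B ×ˢ B).filter fun t => t.1.1 + t.2.1 = t.1.2 + t.2.2).card

namespace SarkozyAux

open Polynomial Finset

variable {p : ℕ} [Fact p.Prime]

lemma lagrange_coeff_sum (A : Finset (ZMod p)) {i : ℕ} (hi : i < A.card) :
    ∑ a ∈ A, a ^ i * (Lagrange.basis A id a).coeff (A.card - 1)
      = if i = A.card - 1 then 1 else 0 := by
  have hinj : Set.InjOn (id : ZMod p → ZMod p) A := Function.injective_id.injOn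
  have hdeg : (X ^ i : (ZMod p)[X]).degree < A.card := by
    rw [degree_X_pow]
    exact_mod_cast Nat.cast_lt.mpr hi
  have h := Lagrange.eq_interpolate (f := (X ^ i : (ZMod p)[X])) hinj hdeg
  have h2 := congrArg (fun q => Polynomial.coeff q (A.card - 1)) h
  simp only [Lagrange.interpolate_apply, Polynomial.finset_sum_coeff,
    Polynomial.coeff_C_mul, Polynomial.eval_pow, Polynomial.eval_X, id] at h2
  rw [Polynomial.coeff_X_pow] at h2
  rw [← h2]
  by_cases hcase : i = A.card - 1 <;> simp [hcase, eq_comm]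

lemma stepanov (hp2 : p ≠ 2) (A B : Finset (ZMod p))
    (hAk : A.card ≤ (p - 1) / 2)
    (h : ∀ a ∈ A, ∀ b ∈ B, (a + b) ^ ((p - 1) / 2) = 1) :
    B.card * (A.card - 1) ≤ (p - 1) / 2 - 1 := by
  have hp : p.Prime := Fact.out
  have hodd : p % 2 = 1 := Nat.odd_iff.mp (hp.odd_of_ne_two hp2)
  have hp3 : 3 ≤ p := by have := hp.two_le; omega
  set k := (p - 1) / 2 with hk
  have h2k : 2 * k = p - 1 := by omega
  set m := A.card with hmdef
  by_cases hm : m < 2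
  · interval_cases m <;> simp
  push_neg at hm
  have hk1 : 1 ≤ k := by omega
  set N := k + m - 2 with hN
  have hNp : N ≤ p - 3 := by omega
  set c : ZMod p → ZMod p := fun a => (Lagrange.basis A id a).coeff (m - 1) with hcdef
  have hc : ∀ i < m, ∑ a ∈ A, a ^ i * c a = if i = m - 1 then 1 else 0 := by
    intro i hi
    exact lagrange_coeff_sum A hi
  have hsum0 : ∀ i ≤ m - 2, ∑ a ∈ A, a ^ i * c a = 0 := by
    intro i hi
    rw [hc i (by omega), if_neg (by omega)]
  set F : (ZMod p)[X] := ∑ a ∈ A, C (c a) * (X + C a) ^ N with hF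
  have hcoeff : ∀ t, F.coeff t = (N.choose t : ZMod p) * ∑ a ∈ A, a ^ (N - t) * c a := by
    intro t
    rw [hF, finset_sum_coeff]
    simp only [coeff_C_mul, coeff_X_add_C_pow]
    rw [Finset.mul_sum]
    exact Finset.sum_congr rfl fun a _ => by ring
  have hdegF : F.natDegree ≤ k - 1 := by
    rw [natDegree_le_iff_coeff_eq_zero]
    intro t ht
    rw [hcoeff]
    by_cases htN : N < t
    · rw [Nat.choose_eq_zero_of_lt htN]
      simp
    · rw [hsum0 (N - t) (by omega), mul_zero]
  have hFne : F ≠ 0 := by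
    have hco : F.coeff (k - 1) = (N.choose (k - 1) : ZMod p) := by
      rw [hcoeff]
      have hNk : N - (k - 1) = m - 1 := by omega
      rw [hNk, hc (m - 1) (by omega), if_pos rfl, mul_one]
    intro hF0
    rw [hF0, coeff_zero] at hco
    have hdvd : p ∣ N.choose (k - 1) :=
      (ZMod.natCast_eq_zero_iff _ _).mp hco.symm
    have hdvd2 : p ∣ Nat.factorial N := hdvd.trans
      ⟨Nat.factorial (k - 1) * Nat.factorial (N - (k - 1)), by
        rw [← mul_assoc, Nat.choose_mul_factorial_mul_factorial (by omega)]⟩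
    have := (Nat.Prime.dvd_factorial hp).mp hdvd2
    omega
  have hshift : ∀ (b : ZMod p), ∀ i ≤ m - 2, ∑ a ∈ A, (a + b) ^ i * c a = 0 := by
    intro b i hi
    have expand : ∀ a : ZMod p, (a + b) ^ i * c a
        = ∑ r ∈ Finset.range (i + 1), (b ^ (i - r) * (i.choose r : ZMod p)) * (a ^ r * c a) := by
      intro a
      rw [add_pow, Finset.sum_mul]
      exact Finset.sum_congr rfl fun r _ => by ring
    rw [Finset.sum_congr rfl fun a _ => expand a, Finset.sum_comm]
    refine Finset.sum_eq_zero fun r hr => ?_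
    rw [← Finset.mul_sum, hsum0 r (by
      have := Finset.mem_range.mp hr; omega), mul_zero]
  have hdvdb : ∀ b ∈ B, (X - C b) ^ (m - 1) ∣ F := by
    intro b hb
    have hGcomp : F.comp (X + C b) = ∑ a ∈ A, C (c a) * (X + C (a + b)) ^ N := by
      rw [hF, Polynomial.sum_comp]
      refine Finset.sum_congr rfl fun a _ => ?_
      rw [mul_comp, pow_comp, add_comp, X_comp, C_comp, C_comp, add_assoc, ← C_add,
        add_comm b a]
    have hGlow : X ^ (m - 1) ∣ F.comp (X + C b) := by
      rw [X_pow_dvd_iff]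
      intro j hj
      rw [hGcomp, finset_sum_coeff]
      simp only [coeff_C_mul, coeff_X_add_C_pow]
      have hsplit : ∀ a ∈ A, (a + b) ^ (N - j) = (a + b) ^ (m - 2 - j) := by
        intro a ha
        have : N - j = k + (m - 2 - j) := by omega
        rw [this, pow_add, h a ha b hb, one_mul]
      calc ∑ a ∈ A, c a * ((a + b) ^ (N - j) * (N.choose j : ZMod p))
          = (N.choose j : ZMod p) * ∑ a ∈ A, (a + b) ^ (m - 2 - j) * c a := by
            rw [Finset.mul_sum]
            refine Finset.sum_congr rfl fun a ha => ?_
            rw [hsplit a ha]; ring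
        _ = 0 := by rw [hshift b (m - 2 - j) (by omega), mul_zero]
    obtain ⟨H, hH⟩ := hGlow
    have hFcomp : F = (F.comp (X + C b)).comp (X - C b) := by
      rw [comp_assoc]
      simp
    rw [hFcomp, hH, mul_comp, pow_comp, X_comp]
    exact Dvd.intro _ rfl
  have hcop : (↑B : Set (ZMod p)).Pairwise
      (Function.onFun IsCoprime fun b => (X - C b : (ZMod p)[X]) ^ (m - 1)) := by
    intro b hb b' hb' hne
    exact (Polynomial.isCoprime_X_sub_C_of_isUnit_sub
      (isUnit_iff_ne_zero.mpr (sub_ne_zero.mpr hne))).pow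
  have hproddvd : (∏ b ∈ B, (X - C b) ^ (m - 1)) ∣ F :=
    Finset.prod_dvd_of_coprime hcop hdvdb
  have hdeg := Polynomial.natDegree_le_of_dvd hproddvd hFne
  rw [Polynomial.natDegree_prod _ _ (fun b _ => pow_ne_zero _ (X_sub_C_ne_zero b))] at hdeg
  simp only [natDegree_pow, natDegree_X_sub_C, mul_one, Finset.sum_const, smul_eq_mul] at hdeg
  omega

lemma euler_Rp (hp2 : p ≠ 2) {x : ZMod p} (hx : x ∈ Rp p) : x ^ ((p - 1) / 2) = 1 := by
  have hp : p.Prime := Fact.out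
  have hodd : p % 2 = 1 := Nat.odd_iff.mp (hp.odd_of_ne_two hp2)
  rw [Rp, Finset.mem_filter] at hx
  obtain ⟨-, hx0, y, rfl⟩ := hx
  have hy : y ≠ 0 := by rintro rfl; simp at hx0
  have h2 : (y * y) ^ ((p - 1) / 2) = y ^ (p - 1) := by
    rw [← pow_two, ← pow_mul]
    congr 1
    omega
  rw [h2, ZMod.pow_card_sub_one_eq_one hy]

lemma zmod_two_ne_zero (hp2 : p ≠ 2) : (2 : ZMod p) ≠ 0 := by
  have hp : p.Prime := Fact.out
  have : ((2 : ℕ) : ZMod p) ≠ 0 := by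
    rw [Ne, ZMod.natCast_eq_zero_iff]
    intro hdvd
    exact hp2 ((Nat.prime_dvd_prime_iff_eq hp Nat.prime_two).mp hdvd)
  simpa using this

lemma card_Rp (hp2 : p ≠ 2) : 2 * (Rp p).card = p - 1 := by
  have hp : p.Prime := Fact.out
  have h2p : (2 : ZMod p) ≠ 0 := zmod_two_ne_zero hp2
  have key : (Finset.univ.filter fun y : ZMod p => y ≠ 0).card
      = ∑ x ∈ Rp p, ((Finset.univ.filter fun y : ZMod p => y ≠ 0).filter
          fun y => y * y = x).card := by
    refine Finset.card_eq_sum_card_fiberwise fun y hy => ?_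
    rw [Finset.mem_coe, Finset.mem_filter] at hy
    rw [Finset.mem_coe, Rp, Finset.mem_filter]
    exact ⟨Finset.mem_univ _, mul_ne_zero hy.2 hy.2, ⟨y, rfl⟩⟩
  have hfib : ∀ x ∈ Rp p, ((Finset.univ.filter fun y : ZMod p => y ≠ 0).filter
      fun y => y * y = x).card = 2 := by
    intro x hx
    rw [Rp, Finset.mem_filter] at hx
    obtain ⟨-, hx0, y₀, rfl⟩ := hx
    have hy₀ : y₀ ≠ 0 := by rintro rfl; simp at hx0
    have hne : y₀ ≠ -y₀ := by
      intro hcon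
      have : (2 : ZMod p) * y₀ = 0 := by linear_combination hcon
      rcases mul_eq_zero.mp this with h | h
      exacts [h2p h, hy₀ h]
    have : ((Finset.univ.filter fun y : ZMod p => y ≠ 0).filter
        fun y => y * y = y₀ * y₀) = {y₀, -y₀} := by
      ext y
      simp only [Finset.mem_filter, Finset.mem_univ, true_and, Finset.mem_insert,
        Finset.mem_singleton]
      constructor
      · rintro ⟨hy0, hyy⟩
        have hfac : (y - y₀) * (y + y₀) = 0 := by linear_combination hyy
        rcases mul_eq_zero.mp hfac with h | h
        · exact Or.inl (by linear_combination h)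
        · exact Or.inr (by linear_combination h)
      · rintro (rfl | rfl)
        · exact ⟨hy₀, rfl⟩
        · exact ⟨neg_ne_zero.mpr hy₀, by ring⟩
    rw [this, Finset.card_insert_of_notMem (by simpa using hne), Finset.card_singleton]
  have hcard : (Finset.univ.filter fun y : ZMod p => y ≠ 0).card = p - 1 := by
    rw [Finset.filter_ne' Finset.univ (0 : ZMod p), Finset.card_erase_of_mem (Finset.mem_univ _),
      Finset.card_univ, ZMod.card]
  rw [hcard, Finset.sum_congr rfl hfib, Finset.sum_const, smul_eq_mul] at key
  omega

lemma card_fiber_sum (A B : Finset (ZMod p)) :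
    A.card * B.card = ∑ x ∈ A + B, repCount A B x := by
  rw [← Finset.card_product]
  exact Finset.card_eq_sum_card_fiberwise fun ab hab => by
    rw [Finset.mem_coe, Finset.mem_product] at hab
    exact Finset.add_mem_add hab.1 hab.2

lemma counting (A B : Finset (ZMod p)) :
    2 * (A + B).card ≤ uniqueRep A B + A.card * B.card := by
  have hone : ∀ x ∈ A + B, 1 ≤ repCount A B x := by
    intro x hx
    rw [Finset.mem_add] at hx
    obtain ⟨a, ha, b, hb, rfl⟩ := hx
    refine Finset.card_pos.mpr ⟨(a, b), ?_⟩
    rw [Finset.mem_filter, Finset.mem_product]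
    exact ⟨⟨ha, hb⟩, rfl⟩
  rw [card_fiber_sum]
  calc 2 * (A + B).card = ∑ _x ∈ A + B, 2 := by rw [Finset.sum_const, smul_eq_mul, mul_comm]
    _ ≤ ∑ x ∈ A + B, ((if repCount A B x = 1 then 1 else 0) + repCount A B x) := by
        refine Finset.sum_le_sum fun x hx => ?_
        have := hone x hx
        by_cases hone' : repCount A B x = 1 <;> simp [hone'] <;> omega
    _ = uniqueRep A B + ∑ x ∈ A + B, repCount A B x := by
        rw [Finset.sum_add_distrib, uniqueRep, Finset.card_filter]

lemma nat_chain {sa sb k u : ℕ} (h2a : 2 ≤ sa) (h2b : 2 ≤ sb)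
    (st1 : sb * (sa - 1) ≤ k - 1) (st2 : sa * (sb - 1) ≤ k - 1)
    (hc : 2 * k ≤ u + sa * sb) (hk : 1 ≤ k) :
    k + 1 ≤ u + min sa sb ∧ (min sa sb) * (min sa sb - 1) ≤ k - 1 := by
  rcases le_total sa sb with hab | hab
  · rw [min_eq_left hab]
    have hid : sa * sb = sa * (sb - 1) + sa := by
      have h1 : sb - 1 + 1 = sb := by omega
      calc sa * sb = sa * (sb - 1 + 1) := by rw [h1]
        _ = sa * (sb - 1) + sa := by ring
    constructor
    · omega
    · calc sa * (sa - 1) ≤ sa * (sb - 1) := Nat.mul_le_mul_left _ (by omega)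
        _ ≤ k - 1 := st2
  · rw [min_eq_right hab]
    have hid : sa * sb = sb * (sa - 1) + sb := by
      have h1 : sa - 1 + 1 = sa := by omega
      calc sa * sb = (sa - 1 + 1) * sb := by rw [h1]
        _ = sb * (sa - 1) + sb := by ring
    constructor
    · omega
    · calc sb * (sb - 1) ≤ sb * (sa - 1) := Nat.mul_le_mul_left _ (by omega)
        _ ≤ k - 1 := st1

lemma p7_case : ∀ a₁ a₂ b₁ b₂ : ZMod 7, a₁ ≠ a₂ → b₁ ≠ b₂ →
    ({a₁, a₂} + {b₁, b₂} : Finset (ZMod 7)) ≠ Rp 7 := by decide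

end SarkozyAux

set_option maxHeartbeats 1600000 in
open SarkozyAux Finset in
theorem stmt_5 (p : ℕ) [Fact p.Prime] (A B : Finset (ZMod p))
    (hA : 2 ≤ A.card) (hB : 2 ≤ B.card) (h : A + B = Rp p) :
    (uniqueRep A B : ℝ) ≥ Real.sqrt p / Real.log 2 - 1.6 := by
  have hp : p.Prime := Fact.out
  have hAne : A.Nonempty := Finset.card_pos.mp (by omega)
  have hBne : B.Nonempty := Finset.card_pos.mp (by omega)
  by_cases hp2 : p = 2
  · exfalso
    subst hp2
    have hcard : (Rp 2).card = 1 := by decide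
    have := Finset.card_le_card_add_right (s := A) hBne
    rw [h, hcard] at this
    omega
  -- odd case
  have hodd : p % 2 = 1 := Nat.odd_iff.mp (hp.odd_of_ne_two hp2)
  set k := (p - 1) / 2 with hkdef
  have h2k : 2 * k = p - 1 := by omega
  have hRcard : 2 * (Rp p).card = p - 1 := card_Rp hp2
  have hABcard : (A + B).card = k := by rw [h]; omega
  have hEuler : ∀ a ∈ A, ∀ b ∈ B, (a + b) ^ k = 1 := fun a ha b hb =>
    euler_Rp hp2 (h ▸ Finset.add_mem_add ha hb)
  have hEuler' : ∀ b ∈ B, ∀ a ∈ A, (b + a) ^ k = 1 := fun b hb a ha => by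
    rw [add_comm]; exact hEuler a ha b hb
  have hAk : A.card ≤ k := by
    have := Finset.card_le_card_add_right (s := A) hBne
    omega
  have hBk : B.card ≤ k := by
    have := Finset.card_le_card_add_left (t := B) hAne
    omega
  have st1 : B.card * (A.card - 1) ≤ k - 1 := stepanov hp2 A B hAk hEuler
  have st2 : A.card * (B.card - 1) ≤ k - 1 := stepanov hp2 B A hBk hEuler'
  have hcount : 2 * k ≤ uniqueRep A B + A.card * B.card := by
    rw [← hABcard]; exact counting A B
  have hk1 : 1 ≤ k := by
    have := hp.two_le
    omega
  obtain ⟨hu, hnn⟩ := nat_chain hA hB st1 st2 hcount hk1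
  set n := min A.card B.card with hndef
  have hn2 : 2 ≤ n := le_min hA hB
  have hn_ge : 2 ≤ n * (n - 1) := by
    calc 2 = 2 * 1 := rfl
      _ ≤ n * (n - 1) := Nat.mul_le_mul hn2 (by omega)
  have hk3 : 3 ≤ k := by omega
  -- so p ≥ 7
  by_cases hp7 : p = 7
  · exfalso
    subst hp7
    have hk7 : k = 3 := by omega
    have hA2 : A.card = 2 := by
      have : A.card ≤ A.card * (B.card - 1) :=
        Nat.le_mul_of_pos_right _ (by omega)
      omega
    have hB2 : B.card = 2 := by
      have : B.card ≤ B.card * (A.card - 1) :=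
        Nat.le_mul_of_pos_right _ (by omega)
      omega
    obtain ⟨a₁, a₂, ha12, rfl⟩ := Finset.card_eq_two.mp hA2
    obtain ⟨b₁, b₂, hb12, rfl⟩ := Finset.card_eq_two.mp hB2
    exact p7_case a₁ a₂ b₁ b₂ ha12 hb12 h
  by_cases hp11 : p = 11
  · subst hp11
    have hk11 : k = 5 := by omega
    have hn_eq : n = 2 := by
      by_contra hne
      have h3n : 3 ≤ n := by omega
      have : 3 * 2 ≤ n * (n - 1) := Nat.mul_le_mul h3n (by omega)
      omega
    have hu4 : 4 ≤ uniqueRep A B := by omega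
    have hsq : Real.sqrt 11 ≤ 3.3167 := by
      calc Real.sqrt 11 ≤ Real.sqrt (3.3167 ^ 2) := Real.sqrt_le_sqrt (by norm_num)
        _ = 3.3167 := Real.sqrt_sq (by norm_num)
    have hlog := Real.log_two_gt_d9
    have hlogpos : (0 : ℝ) < Real.log 2 := by linarith
    have hdiv : Real.sqrt 11 / Real.log 2 ≤ 3.3167 / 0.6931471803 :=
      div_le_div₀ (by norm_num) hsq (by norm_num) (le_of_lt hlog)
    have : (11 : ℕ) = (11 : ℝ) := by norm_num
    rw [ge_iff_le]
    have hcast : (4 : ℝ) ≤ (uniqueRep A B : ℝ) := by exact_mod_cast hu4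
    have : (3.3167 : ℝ) / 0.6931471803 ≤ 4.79 := by norm_num
    push_cast
    linarith
  -- p ≥ 13
  have hp9 : p ≠ 9 := by rintro rfl; norm_num at hp
  have hp13 : 13 ≤ p := by omega
  -- real arithmetic
  have hu' : (k : ℝ) + 1 ≤ (uniqueRep A B : ℝ) + (n : ℝ) := by exact_mod_cast hu
  have hq : (n : ℝ) * ((n : ℝ) - 1) ≤ (k : ℝ) - 1 := by
    have h1 : (n * (n - 1) : ℕ) ≤ (k - 1 : ℕ) := hnn
    have h2 : ((n * (n - 1) : ℕ) : ℝ) ≤ ((k - 1 : ℕ) : ℝ) := by exact_mod_cast h1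
    rw [Nat.cast_mul, Nat.cast_sub (by omega), Nat.cast_sub (by omega)] at h2
    simpa using h2
  set t := Real.sqrt p with htdef
  have htpos : 0 < t := Real.sqrt_pos.mpr (by positivity)
  have ht2 : t ^ 2 = (p : ℝ) := Real.sq_sqrt (by positivity)
  have ht : 3.6055 ≤ t := by
    have h13 : (13 : ℝ) ≤ (p : ℝ) := by exact_mod_cast hp13
    have : Real.sqrt 13 ≤ t := Real.sqrt_le_sqrt h13
    have h36 : (3.6055 : ℝ) ≤ Real.sqrt 13 := by
      rw [show (3.6055 : ℝ) = Real.sqrt (3.6055 ^ 2) from (Real.sqrt_sq (by norm_num)).symm]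
      exact Real.sqrt_le_sqrt (by norm_num)
    linarith
  have hpk : (p : ℝ) = 2 * (k : ℝ) + 1 := by
    have : p = 2 * k + 1 := by omega
    exact_mod_cast this
  have hlog := Real.log_two_gt_d9
  have hlogpos : (0 : ℝ) < Real.log 2 := by linarith
  -- √p / log 2 ≤ 1.4427 t
  have hstep1 : Real.sqrt p / Real.log 2 ≤ 1.4427 * t := by
    rw [div_le_iff₀ hlogpos, ← htdef]
    nlinarith
  -- 2n - 1 ≤ 1.41422 t
  have h2n : 2 * (n : ℝ) - 1 ≤ 1.41422 * t := by
    have hsq : (2 * (n : ℝ) - 1) ^ 2 ≤ 2 * t ^ 2 - 5 := by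
      rw [ht2, hpk]
      nlinarith
    have hnpos : (0 : ℝ) ≤ 2 * (n : ℝ) - 1 := by
      have : (2 : ℝ) ≤ (n : ℝ) := by exact_mod_cast hn2
      linarith
    nlinarith [sq_nonneg (1.41422 * t - (2 * (n : ℝ) - 1)), sq_nonneg (1.41422 * t + (2 * (n : ℝ) - 1))]
  -- final
  have hfinal : 1.4427 * t - 1.6 ≤ (k : ℝ) + 1 - (n : ℝ) := by
    have hkt : (k : ℝ) = (t ^ 2 - 1) / 2 := by rw [ht2]; linarith
    rw [hkt]
    nlinarith [sq_nonneg (t - 3.6055), ht, h2n]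
  rw [ge_iff_le]
  linarith
end

section
/- Let p be an odd prime and suppose A, B ⊆ 𝔽_p are nonempty with A + B ⊆ R_p (nonzero quadratic residues). Then |A|·|B| ≤ (p/(√p + 1))². -/
open scoped Pointwise
open Finset

lemma keyShift (p : ℕ) [Fact p.Prime] (hp : p ≠ 2) (c : ZMod p) (hc : c ≠ 0) :
    ∑ x : ZMod p, quadraticChar (ZMod p) x * quadraticChar (ZMod p) (x + c) = -1 := by
  set χ := quadraticChar (ZMod p) with hχ
  have hchar : ringChar (ZMod p) ≠ 2 := by
    rw [ZMod.ringChar_zmod_n]; exact hp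
  have hstep : ∀ x : ZMod p, x ≠ 0 → χ x * χ (x + c) = χ (1 + c * x⁻¹) := by
    intro x hx
    have hxc : x + c = x * (1 + c * x⁻¹) := by
      field_simp
    rw [hxc, map_mul, ← mul_assoc, ← sq, quadraticChar_sq_one hx, one_mul]
  have h0 : χ 0 * χ (0 + c) = 0 := by
    simp [hχ]
  rw [← Finset.sum_erase_add _ _ (Finset.mem_univ (0 : ZMod p)), h0, add_zero]
  have : ∑ x ∈ Finset.univ.erase (0 : ZMod p), χ x * χ (x + c)
      = ∑ y ∈ Finset.univ.erase (1 : ZMod p), χ y := by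
    apply Finset.sum_nbij' (fun x => 1 + c * x⁻¹) (fun y => c * (y - 1)⁻¹)
    · intro x hx
      have hx0 : x ≠ 0 := Finset.ne_of_mem_erase hx
      simp only [Finset.mem_erase, Finset.mem_univ, and_true]
      intro hcontra
      have : c * x⁻¹ = 0 := by linear_combination hcontra
      rcases mul_eq_zero.mp this with h' | h'
      · exact hc h'
      · exact hx0 (inv_eq_zero.mp h' ▸ rfl)
    · intro y hy
      have hy1 : y ≠ 1 := Finset.ne_of_mem_erase hy
      simp only [Finset.mem_erase, Finset.mem_univ, and_true]
      intro hcontra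
      rcases mul_eq_zero.mp hcontra with h' | h'
      · exact hc h'
      · exact hy1 (by
          have := inv_eq_zero.mp h'
          have : y = 1 := by linear_combination this
          exact this)
    · intro x hx
      have hx0 : x ≠ 0 := Finset.ne_of_mem_erase hx
      field_simp
      simp [hc]
    · intro y hy
      have hy1 : y ≠ 1 := Finset.ne_of_mem_erase hy
      have hy1' : y - 1 ≠ 0 := sub_ne_zero.mpr hy1
      field_simp
      ring
    · intro x hx
      exact hstep x (Finset.ne_of_mem_erase hx)
  rw [this]
  have hsum : ∑ a : ZMod p, χ a = 0 := quadraticChar_sum_zero hchar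
  have h2 := Finset.sum_erase_add Finset.univ χ (Finset.mem_univ (1 : ZMod p))
  rw [hsum] at h2
  have hχ1 : χ 1 = 1 := map_one χ
  omega

lemma keyInt (p : ℕ) [Fact p.Prime] (hp : p ≠ 2) (A B : Finset (ZMod p))
    (hA : A.Nonempty) (hB : B.Nonempty) (h : A + B ⊆ Rp p) :
    (p : ℤ) * A.card * B.card ≤ ((p : ℤ) - A.card) * ((p : ℤ) - B.card) := by
  set χ := quadraticChar (ZMod p) with hχdef
  have hchar : ringChar (ZMod p) ≠ 2 := by rw [ZMod.ringChar_zmod_n]; exact hp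
  set T : ZMod p → ℤ := fun x => ∑ b ∈ B, χ (x + b) with hTdef
  have hχ1 : ∀ a ∈ A, ∀ b ∈ B, χ (a + b) = 1 := by
    intro a ha b hb
    have hmem : a + b ∈ Rp p := h (Finset.add_mem_add ha hb)
    rw [Rp, Finset.mem_filter] at hmem
    exact (quadraticChar_one_iff_isSquare hmem.2.1).mpr hmem.2.2
  have hTA : ∀ a ∈ A, T a = B.card := by
    intro a ha
    rw [hTdef]
    simp only
    rw [Finset.sum_congr rfl (fun b hb => hχ1 a ha b hb)]
    simp
  have hshift : ∀ b : ZMod p, ∑ x : ZMod p, χ (x + b) = 0 := by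
    intro b
    rw [Fintype.sum_equiv (Equiv.addRight b) (fun x => χ (x + b)) χ (fun x => rfl)]
    exact quadraticChar_sum_zero hchar
  have hTsum : ∑ x : ZMod p, T x = 0 := by
    rw [hTdef]
    simp only
    rw [Finset.sum_comm]
    simp [hshift]
  have hsq : ∀ b ∈ B, ∀ b' ∈ B, ∑ x : ZMod p, χ (x + b) * χ (x + b') =
      if b = b' then (p : ℤ) - 1 else -1 := by
    intro b _ b' _
    by_cases hbb : b = b'
    · subst hbb
      simp only [if_pos rfl]
      have hval : ∀ x : ZMod p, χ (x + b) * χ (x + b) =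
          if x + b = 0 then 0 else 1 := by
        intro x
        by_cases hx : x + b = 0
        · simp [hx, hχdef]
        · rw [← sq, quadraticChar_sq_one hx, if_neg hx]
      rw [Finset.sum_congr rfl fun x _ => hval x]
      have : ∀ x : ZMod p, (if x + b = 0 then (0:ℤ) else 1) =
          1 - (if x = -b then (1:ℤ) else 0) := by
        intro x
        by_cases hx : x + b = 0
        · rw [if_pos hx, if_pos (by linear_combination hx), sub_self]
        · rw [if_neg hx, if_neg (fun hc => hx (by rw [hc]; ring)), sub_zero]
      rw [Finset.sum_congr rfl fun x _ => this x, Finset.sum_sub_distrib,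
        Finset.sum_ite_eq' Finset.univ (-b) (fun _ => (1:ℤ)), if_pos (Finset.mem_univ _),
        Finset.sum_const, Finset.card_univ, ZMod.card]
      simp
    · rw [if_neg hbb]
      have hc : b' - b ≠ 0 := sub_ne_zero.mpr (fun e => hbb e.symm)
      rw [Fintype.sum_equiv (Equiv.addRight b) (fun x => χ (x + b) * χ (x + b'))
        (fun x => χ x * χ (x + (b' - b)))
        (fun x => by simp only [Equiv.coe_addRight]; rw [show x + b + (b' - b) = x + b' by ring])]
      exact keyShift p hp (b' - b) hc
  have hTsq : ∑ x : ZMod p, T x ^ 2 = B.card * ((p : ℤ) - B.card) := by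
    have e1 : ∑ x : ZMod p, T x ^ 2 =
        ∑ x : ZMod p, ∑ b ∈ B, ∑ b' ∈ B, χ (x + b) * χ (x + b') := by
      refine Finset.sum_congr rfl fun x _ => ?_
      rw [hTdef]
      simp only
      rw [sq, Finset.sum_mul_sum]
    rw [e1, Finset.sum_comm]
    have e2 : ∀ b ∈ B, ∑ x : ZMod p, ∑ b' ∈ B, χ (x + b) * χ (x + b') =
        ∑ b' ∈ B, ∑ x : ZMod p, χ (x + b) * χ (x + b') := fun b _ => Finset.sum_comm
    rw [Finset.sum_congr rfl e2]
    have e3 : ∀ b ∈ B, ∑ b' ∈ B, ∑ x : ZMod p, χ (x + b) * χ (x + b') = (p : ℤ) - B.card := by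
      intro b hb
      rw [Finset.sum_congr rfl fun b' hb' => hsq b hb b' hb']
      have : ∀ b' ∈ B, (if b = b' then (p : ℤ) - 1 else -1) =
          (if b = b' then (p : ℤ) else 0) + (-1) := by
        intro b' _
        by_cases hbb : b = b' <;> simp [hbb] <;> ring
      rw [Finset.sum_congr rfl this, Finset.sum_add_distrib, Finset.sum_ite_eq,
        if_pos hb, Finset.sum_const]
      push_cast
      ring
    rw [Finset.sum_congr rfl e3, Finset.sum_const]
    push_cast
    ring
  -- split over complement of A
  set C := Finset.univ \ A with hC
  have hAle : A.card ≤ p := by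
    have := Finset.card_le_card (Finset.subset_univ A)
    rwa [Finset.card_univ, ZMod.card] at this
  have hCcard : (C.card : ℤ) = (p : ℤ) - A.card := by
    rw [hC, Finset.card_sdiff_of_subset (Finset.subset_univ A), Finset.card_univ, ZMod.card,
      Nat.cast_sub hAle]
  have hsdiff1 := Finset.sum_sdiff (f := T) (Finset.subset_univ A)
  have hsdiff2 := Finset.sum_sdiff (f := fun x => T x ^ 2) (Finset.subset_univ A)
  have hsumA : ∑ x ∈ A, T x = (A.card : ℤ) * B.card := by
    rw [Finset.sum_congr rfl hTA, Finset.sum_const]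
    push_cast; ring
  have hsumA2 : ∑ x ∈ A, T x ^ 2 = (A.card : ℤ) * (B.card : ℤ) ^ 2 := by
    rw [Finset.sum_congr rfl fun a ha => by rw [hTA a ha], Finset.sum_const]
    push_cast; ring
  have hCsum : ∑ x ∈ C, T x = -((A.card : ℤ) * B.card) := by
    have := hsdiff1
    rw [hTsum, hsumA] at this
    linarith
  have hCsum2 : ∑ x ∈ C, T x ^ 2 =
      (B.card : ℤ) * ((p : ℤ) - B.card) - (A.card : ℤ) * (B.card : ℤ) ^ 2 := by
    have := hsdiff2
    rw [hTsq, hsumA2] at this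
    linarith
  have CS := sq_sum_le_card_mul_sum_sq (s := C) (f := T)
  rw [hCsum, hCsum2, hCcard] at CS
  have hb0 : (0 : ℤ) < B.card := by exact_mod_cast Finset.card_pos.mpr hB
  have key2 : (p : ℤ) * A.card * B.card * B.card ≤
      ((p : ℤ) - A.card) * ((p : ℤ) - B.card) * B.card := by nlinarith [CS]
  exact le_of_mul_le_mul_right key2 hb0

theorem stmt_14 (p : ℕ) [Fact p.Prime] (hp : p ≠ 2) (A B : Finset (ZMod p))
    (hA : A.Nonempty) (hB : B.Nonempty) (h : A + B ⊆ Rp p) :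
    (A.card : ℝ) * B.card ≤ ((p : ℝ) / (Real.sqrt p + 1)) ^ 2 := by
  have hint := keyInt p hp A B hA hB h
  have hxy : (p : ℝ) * A.card * B.card ≤ ((p : ℝ) - A.card) * ((p : ℝ) - B.card) := by
    exact_mod_cast hint
  set x : ℝ := (A.card : ℝ) with hx
  set y : ℝ := (B.card : ℝ) with hy
  have hx1 : (1 : ℝ) ≤ x := by rw [hx]; exact_mod_cast Nat.one_le_iff_ne_zero.mpr (Finset.card_ne_zero_of_mem hA.choose_spec)
  have hy1 : (1 : ℝ) ≤ y := by rw [hy]; exact_mod_cast Nat.one_le_iff_ne_zero.mpr (Finset.card_ne_zero_of_mem hB.choose_spec)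
  have hp3 : (3 : ℕ) ≤ p := (Fact.out : p.Prime).two_le.lt_of_ne (Ne.symm hp)
  have hp3' : (3 : ℝ) ≤ p := by exact_mod_cast hp3
  set s := Real.sqrt p with hs
  have hs2 : s ^ 2 = p := Real.sq_sqrt (by linarith)
  have hs1 : (1 : ℝ) < s := by
    nlinarith [Real.sqrt_nonneg (p : ℝ)]
  set t := Real.sqrt (x * y) with ht
  have ht2 : t ^ 2 = x * y := Real.sq_sqrt (by nlinarith)
  have ht1 : (1 : ℝ) ≤ t := by
    rw [ht, show (1:ℝ) = Real.sqrt 1 by simp]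
    exact Real.sqrt_le_sqrt (by nlinarith)
  have hamgm : 2 * t ≤ x + y := by
    have hu : Real.sqrt x ^ 2 = x := Real.sq_sqrt (by linarith)
    have hv : Real.sqrt y ^ 2 = y := Real.sq_sqrt (by linarith)
    have htuv : t = Real.sqrt x * Real.sqrt y := by
      rw [ht, Real.sqrt_mul (by linarith)]
    nlinarith [sq_nonneg (Real.sqrt x - Real.sqrt y)]
  have hquad : ((p : ℝ) - 1) * t ^ 2 + 2 * p * t - p ^ 2 ≤ 0 := by
    have h1 : (p : ℝ) * (x * y) ≤ p ^ 2 - p * (x + y) + x * y := by nlinarith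
    nlinarith [mul_le_mul_of_nonneg_left hamgm (by positivity : (0:ℝ) ≤ (p:ℝ))]
  have hroot : t * (s + 1) ≤ p := by
    by_contra hcon
    push_neg at hcon
    nlinarith [mul_lt_mul_of_pos_left hcon (by nlinarith : (0:ℝ) < (s - 1) * t)]
  have hs1' : (0 : ℝ) < s + 1 := by linarith
  calc x * y = t ^ 2 := ht2.symm
    _ ≤ ((p : ℝ) / (s + 1)) ^ 2 := by
        apply pow_le_pow_left₀ (by linarith)
        rw [le_div_iff₀ hs1']
        exact hroot
end

section
/- Let p be an odd prime and suppose A, B ⊆ 𝔽_p satisfy A + B = R_p with |A| = |B| ≥ 2. Then √((p−1)/2) ≤ |A| ≤ √(p−1). -/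
open scoped Pointwise

open Finset
section aux


variable (p : ℕ) [Fact p.Prime]

private lemma hchar (hp : p ≠ 2) : ringChar (ZMod p) ≠ 2 := by
  rw [ZMod.ringChar_zmod_n]; exact hp

private lemma sum_shift (hp : p ≠ 2) {d : ZMod p} (hd : d ≠ 0) :
    ∑ x : ZMod p, quadraticChar (ZMod p) (x * (x + d)) = -1 := by
  set χ := quadraticChar (ZMod p) with hχ
  have h0 : χ ((0 : ZMod p) * (0 + d)) = 0 := by rw [zero_mul]; exact MulChar.map_zero χ
  rw [← Finset.add_sum_erase Finset.univ _ (Finset.mem_univ (0 : ZMod p)), h0, zero_add]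
  have hstep : ∀ x ∈ Finset.univ.erase (0 : ZMod p),
      χ (x * (x + d)) = χ (1 + d * x⁻¹) := by
    intro x hx
    have hx0 : x ≠ 0 := Finset.ne_of_mem_erase hx
    have hxx : x * (x + d) = (x * x) * (1 + d * x⁻¹) := by
      field_simp
    rw [hxx, map_mul, map_mul]
    have : χ x * χ x = 1 := by
      have := quadraticChar_sq_one hx0
      rwa [sq] at this
    rw [hχ] at this ⊢
    rw [this, one_mul]
  rw [Finset.sum_congr rfl hstep]
  have hbij : ∑ x ∈ Finset.univ.erase (0 : ZMod p), χ (1 + d * x⁻¹)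
      = ∑ y ∈ Finset.univ.erase (1 : ZMod p), χ y := by
    refine Finset.sum_nbij' (fun x => 1 + d * x⁻¹) (fun y => d * (y - 1)⁻¹) ?_ ?_ ?_ ?_ ?_
    · intro x hx
      have hx0 : x ≠ 0 := Finset.ne_of_mem_erase hx
      simp only [Finset.mem_erase, Finset.mem_univ, and_true]
      intro hcon
      have : d * x⁻¹ = 0 := by linear_combination hcon
      rcases mul_eq_zero.mp this with h | h
      · exact hd h
      · exact hx0 (inv_eq_zero.mp h)
    · intro y hy
      have hy1 : y ≠ 1 := Finset.ne_of_mem_erase hy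
      simp only [Finset.mem_erase, Finset.mem_univ, and_true]
      intro hcon
      rcases mul_eq_zero.mp hcon with h | h
      · exact hd h
      · exact sub_ne_zero_of_ne hy1 (inv_eq_zero.mp h)
    · intro x hx
      have hx0 : x ≠ 0 := Finset.ne_of_mem_erase hx
      show d * ((1 + d * x⁻¹) - 1)⁻¹ = x
      rw [add_sub_cancel_left, mul_inv, inv_inv, ← mul_assoc, mul_comm d, mul_assoc,
        ← mul_assoc, inv_mul_cancel₀ hd, one_mul]
    · intro y hy
      have hy1 : y - 1 ≠ 0 := sub_ne_zero_of_ne (Finset.ne_of_mem_erase hy)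
      show (1 : ZMod p) + d * (d * (y - 1)⁻¹)⁻¹ = y
      rw [mul_inv, inv_inv, ← mul_assoc, mul_comm d, mul_assoc, ← mul_assoc,
        inv_mul_cancel₀ hd, one_mul]
      ring
    · intro x hx; rfl
  rw [hbij]
  have := quadraticChar_sum_zero (F := ZMod p) (hchar p hp)
  have h2 := Finset.sum_erase_add Finset.univ (fun y => χ y) (Finset.mem_univ (1 : ZMod p))
  rw [this] at h2
  simpa using by linarith [h2]


private lemma sum_two_point (hp : p ≠ 2) {a a' : ZMod p} (ha : a ≠ a') :
    ∑ x : ZMod p, quadraticChar (ZMod p) ((x + a) * (x + a')) = -1 := by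
  have key := sum_shift p hp (d := a' - a) (sub_ne_zero_of_ne (Ne.symm ha))
  rw [← key]
  refine Fintype.sum_equiv (Equiv.addRight a) _ _ ?_
  intro x
  congr 1
  simp only [Equiv.coe_addRight]
  ring

private lemma diag_sum (hp : p ≠ 2) (a : ZMod p) :
    ∑ x : ZMod p, quadraticChar (ZMod p) ((x + a) * (x + a)) = (p : ℤ) - 1 := by
  set χ := quadraticChar (ZMod p) with hχ
  have h1 : ∀ x : ZMod p, χ ((x + a) * (x + a)) = if x + a = 0 then 0 else 1 := by
    intro x
    by_cases hx : x + a = 0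
    · rw [if_pos hx, hx, zero_mul]; exact MulChar.map_zero χ
    · rw [if_neg hx, map_mul]
      have := quadraticChar_sq_one hx
      rwa [sq] at this
  have h2 : ∀ x : ZMod p, (if x + a = 0 then (0:ℤ) else 1) = 1 - (if x = -a then 1 else 0) := by
    intro x
    by_cases hx : x = -a
    · rw [if_pos hx, if_pos (by rw [hx]; ring)]; ring
    · rw [if_neg hx, if_neg (by rwa [add_eq_zero_iff_eq_neg])]; ring
  simp only [h1, h2]
  rw [Finset.sum_sub_distrib, Finset.sum_const,
    Finset.sum_ite_eq' Finset.univ (-a) (fun _ => (1:ℤ)), if_pos (Finset.mem_univ _)]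
  simp [Finset.card_univ, ZMod.card]


private lemma main_sum (hp : p ≠ 2) (A : Finset (ZMod p)) :
    ∑ x : ZMod p, (∑ a ∈ A, quadraticChar (ZMod p) (x + a)) ^ 2
      = (A.card : ℤ) * ((p : ℤ) - A.card) := by
  set χ := quadraticChar (ZMod p) with hχ
  have expand : ∀ x : ZMod p,
      (∑ a ∈ A, χ (x + a)) ^ 2 = ∑ a ∈ A, ∑ a' ∈ A, χ ((x + a) * (x + a')) := by
    intro x
    rw [sq, Finset.sum_mul_sum]
    exact Finset.sum_congr rfl fun a _ => Finset.sum_congr rfl fun a' _ => (map_mul χ _ _).symm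
  simp only [expand]
  rw [Finset.sum_comm]
  have swap2 : ∀ a ∈ A, ∑ x : ZMod p, ∑ a' ∈ A, χ ((x + a) * (x + a'))
      = ∑ a' ∈ A, ∑ x : ZMod p, χ ((x + a) * (x + a')) := fun a _ => Finset.sum_comm
  rw [Finset.sum_congr rfl swap2]
  have hval : ∀ a ∈ A, ∀ a' ∈ A, ∑ x : ZMod p, χ ((x + a) * (x + a'))
      = if a = a' then (p : ℤ) - 1 else -1 := by
    intro a _ a' _
    by_cases hd : a = a'
    · rw [if_pos hd, hd]; exact diag_sum p hp a'
    · rw [if_neg hd]; exact sum_two_point p hp hd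
  rw [Finset.sum_congr rfl fun a ha => Finset.sum_congr rfl (hval a ha)]
  have hinner : ∀ a ∈ A, ∑ a' ∈ A, (if a = a' then (p : ℤ) - 1 else -1)
      = (p : ℤ) - A.card := by
    intro a ha
    have h2 : ∀ a' : ZMod p, (if a = a' then (p : ℤ) - 1 else -1)
        = (if a' = a then (p : ℤ) else 0) - 1 := by
      intro a'
      by_cases h : a' = a
      · rw [if_pos h, if_pos h.symm]
      · rw [if_neg h, if_neg (fun hc => h hc.symm)]; ring
    simp only [h2]
    rw [Finset.sum_sub_distrib, Finset.sum_ite_eq' A a (fun _ => (p : ℤ)), if_pos ha,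
      Finset.sum_const]
    push_cast
    ring
  rw [Finset.sum_congr rfl hinner, Finset.sum_const]
  push_cast
  ring

private lemma Rp_card (hp : p ≠ 2) : 2 * ((Rp p).card : ℤ) + 1 = p := by
  set χ := quadraticChar (ZMod p) with hχ
  have htot : ∑ a : ZMod p, (χ a + 1) = (p : ℤ) := by
    rw [Finset.sum_add_distrib, quadraticChar_sum_zero (hchar p hp), Finset.sum_const]
    simp [Finset.card_univ, ZMod.card]
  rw [← Finset.sum_filter_add_sum_filter_not Finset.univ
    (fun x : ZMod p => x ≠ 0 ∧ IsSquare x)] at htot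
  have h1 : ∑ a ∈ Finset.univ.filter (fun x : ZMod p => x ≠ 0 ∧ IsSquare x), (χ a + 1)
      = 2 * ((Rp p).card : ℤ) := by
    rw [Finset.sum_congr rfl (fun a ha => ?_), Finset.sum_const]
    · show ((Rp p).card : ℤ) • (2 : ℤ) = _
      rw [smul_eq_mul]; ring
    · rw [Finset.mem_filter] at ha
      rw [(quadraticChar_one_iff_isSquare ha.2.1).mpr ha.2.2]; norm_num
  have h2 : ∑ a ∈ Finset.univ.filter (fun x : ZMod p => ¬(x ≠ 0 ∧ IsSquare x)), (χ a + 1)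
      = 1 := by
    have hterm : ∀ a ∈ Finset.univ.filter (fun x : ZMod p => ¬(x ≠ 0 ∧ IsSquare x)),
        χ a + 1 = if a = 0 then 1 else 0 := by
      intro a ha
      rw [Finset.mem_filter] at ha
      by_cases h0 : a = 0
      · rw [if_pos h0, h0, MulChar.map_zero, zero_add]
      · rw [if_neg h0]
        have hns : ¬IsSquare a := fun hs => ha.2 ⟨h0, hs⟩
        rw [quadraticChar_neg_one_iff_not_isSquare.mpr hns]
        ring
    rw [Finset.sum_congr rfl hterm, Finset.sum_ite_eq' _ (0 : ZMod p) (fun _ => (1 : ℤ)),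
      if_pos]
    simp
  rw [h1, h2] at htot
  linarith

end aux

theorem stmt_16 (p : ℕ) [Fact p.Prime] (hp : p ≠ 2) (A B : Finset (ZMod p))
    (hA : 2 ≤ A.card) (hAB : A.card = B.card) (h : A + B = Rp p) :
    Real.sqrt (((p : ℝ) - 1) / 2) ≤ (A.card : ℝ) ∧ (A.card : ℝ) ≤ Real.sqrt ((p : ℝ) - 1) := by
  have hRp : 2 * ((Rp p).card : ℤ) + 1 = p := Rp_card p hp
  set χ := quadraticChar (ZMod p) with hχ
  constructor
  · -- lower bound
    have hle : (Rp p).card ≤ A.card * B.card := by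
      rw [← h]; exact Finset.card_add_le
    have h1 : ((p : ℝ) - 1) / 2 ≤ (A.card : ℝ) ^ 2 := by
      rw [← hAB] at hle
      have : ((Rp p).card : ℝ) ≤ (A.card : ℝ) * A.card := by exact_mod_cast hle
      have h2 : 2 * ((Rp p).card : ℝ) + 1 = p := by exact_mod_cast hRp
      nlinarith
    calc Real.sqrt (((p : ℝ) - 1) / 2) ≤ Real.sqrt ((A.card : ℝ) ^ 2) := Real.sqrt_le_sqrt h1
      _ = (A.card : ℝ) := Real.sqrt_sq (by positivity)
  · -- upper bound
    have hS : ∑ b ∈ B, ∑ a ∈ A, χ (b + a) = (A.card : ℤ) * B.card := by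
      have hone : ∀ b ∈ B, ∀ a ∈ A, χ (b + a) = 1 := by
        intro b hb a ha
        have hmem : a + b ∈ Rp p := by rw [← h]; exact Finset.add_mem_add ha hb
        rw [Rp, Finset.mem_filter] at hmem
        rw [add_comm]
        exact (quadraticChar_one_iff_isSquare hmem.2.1).mpr hmem.2.2
      rw [Finset.sum_congr rfl fun b hb => Finset.sum_congr rfl (hone b hb)]
      simp [mul_comm]
    have hCS : (∑ b ∈ B, ∑ a ∈ A, χ (b + a)) ^ 2
        ≤ (B.card : ℤ) * ∑ b ∈ B, (∑ a ∈ A, χ (b + a)) ^ 2 := by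
      exact sq_sum_le_card_mul_sum_sq
    have hmono : ∑ b ∈ B, (∑ a ∈ A, χ (b + a)) ^ 2 ≤ ∑ x : ZMod p, (∑ a ∈ A, χ (x + a)) ^ 2 :=
      Finset.sum_le_sum_of_subset_of_nonneg (Finset.subset_univ B) fun _ _ _ => sq_nonneg _
    have hmain : ∑ x : ZMod p, (∑ a ∈ A, χ (x + a)) ^ 2
        = (A.card : ℤ) * ((p : ℤ) - A.card) := main_sum p hp A
    have hn : (2 : ℤ) ≤ (A.card : ℤ) := by exact_mod_cast hA
    have hkey : (A.card : ℤ) ^ 2 ≤ (p : ℤ) - 2 := by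
      rw [hS, ← hAB] at hCS
      rw [hmain] at hmono
      nlinarith [hCS, hmono, hn]
    have h3 : (A.card : ℝ) ^ 2 ≤ (p : ℝ) - 1 := by
      have : ((A.card : ℝ)) ^ 2 ≤ (p : ℝ) - 2 := by exact_mod_cast hkey
      linarith
    calc (A.card : ℝ) = Real.sqrt ((A.card : ℝ) ^ 2) := (Real.sqrt_sq (by positivity)).symm
      _ ≤ Real.sqrt ((p : ℝ) - 1) := Real.sqrt_le_sqrt h3
end
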